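/- Let d ≥ 1, 0 < β ≤ γ ≤ 1, L > 0, α > 0, ℓ > 0 and a ∈ ℝ^d. Set C := L / 2^{2+2β} and suppose 0 < Δ ≤ min{1, 2^{β+1}·ℓ^β}. Let a₀ := (Δ^{α/d}, …, Δ^{α/d}) and φ₀(x) = 1/2 − C·min{Δ, Δ^{αγ/d}·ψ̃_γ(Δ^{−α/d}·(x − a₀))}, where ψ̃_γ(u) = (1 − ‖u‖_∞)^γ if ‖u‖_∞ ≤ 1 and 0 otherwise. Define φ_m : ℝ^d → ℝ by φ_m(x) = max{φ₀(x), 1/2 + C·Δ·ψ̂_β(2·ℓ^{−1}·(x − a))}, where ψ̂_β(u) = (1 − ‖u‖_∞)^β if ‖u‖_∞ ≤ 1, ψ̂_β(u) = −(‖u‖_∞ − 1)^β if 1 ≤ ‖u‖_∞ ≤ 2, and ψ̂_β(u) = −1 otherwise. Then |φ_m(x) − φ_m(y)| ≤ L·‖x − y‖_∞^β for all x, y ∈ ℝ^d; that is, φ_m is (β, L)-Hölder on ℝ^d. -/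
import Mathlib


open MeasureTheory

/-- The bump function `ψ̃_γ(u) = (1 - ‖u‖_∞)^γ` for `‖u‖_∞ ≤ 1`, `0` otherwise. -/
noncomputable def psiTilde (d : ℕ) (γ : ℝ) (u : Fin d → ℝ) : ℝ :=
  if ‖u‖ ≤ 1 then (1 - ‖u‖) ^ γ else 0

/-- The signed bump function `ψ̂_β(u) = (1 - ‖u‖_∞)^β` for `‖u‖_∞ ≤ 1`,
`-(‖u‖_∞ - 1)^β` for `1 ≤ ‖u‖_∞ ≤ 2`, and `-1` otherwise. -/
noncomputable def psiHat (d : ℕ) (β : ℝ) (u : Fin d → ℝ) : ℝ :=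
  if ‖u‖ ≤ 1 then (1 - ‖u‖) ^ β
  else if ‖u‖ ≤ 2 then -((‖u‖ - 1) ^ β)
  else -1

/-- The nominal payoff function
`φ₀(x) = 1/2 − C · min {Δ, Δ^{αγ/d} · ψ̃_γ(Δ^{−α/d} (x − a₀))}`, where
`a₀ = (Δ^{α/d}, …, Δ^{α/d})`. -/
noncomputable def phi0 (d : ℕ) (γ α Δ C : ℝ) (x : Fin d → ℝ) : ℝ :=
  1 / 2 - C * min Δ (Δ ^ (α * γ / (d : ℝ)) *
    psiTilde d γ (Δ ^ (-(α / (d : ℝ))) • (x - fun _ => Δ ^ (α / (d : ℝ)))))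

/-- The alternative payoff function
`φ_m(x) = max {φ₀(x), 1/2 + C·Δ·ψ̂_β(2 ℓ⁻¹ (x − a))}`. -/
noncomputable def phiM (d : ℕ) (γ β α Δ C ℓ : ℝ) (a : Fin d → ℝ) (x : Fin d → ℝ) : ℝ :=
  max (phi0 d γ α Δ C x) (1 / 2 + C * Δ * psiHat d β ((2 * ℓ⁻¹) • (x - a)))

/-- Subadditivity consequence: `a^β - b^β ≤ (a-b)^β` for `0 ≤ b ≤ a`, `0 ≤ β ≤ 1`. -/
lemma rpow_sub_rpow_le {β a b : ℝ} (hβ0 : 0 ≤ β) (hβ1 : β ≤ 1) (hb : 0 ≤ b) (hba : b ≤ a) :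
    a ^ β - b ^ β ≤ (a - b) ^ β := by
  have hab : (0:ℝ) ≤ a - b := by linarith
  have h := NNReal.rpow_add_le_add_rpow ((a - b).toNNReal) (b.toNNReal) hβ0 hβ1
  have h' := NNReal.coe_le_coe.2 h
  push_cast at h'
  rw [Real.coe_toNNReal _ hab, Real.coe_toNNReal _ hb] at h'
  have : a - b + b = a := by ring
  rw [this] at h'
  linarith

/-- Scalar profile of `psiHat`. -/
noncomputable def gHat (β t : ℝ) : ℝ :=
  if t ≤ 1 then (1 - t) ^ β else if t ≤ 2 then -((t - 1) ^ β) else -1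

lemma gHat_aux {β : ℝ} (hβ0 : 0 < β) (hβ1 : β ≤ 1) {s t : ℝ} (hs : 0 ≤ s) (hst : s ≤ t) :
    gHat β t ≤ gHat β s ∧ gHat β s - gHat β t ≤ 2 * (t - s) ^ β := by
  have hr : (0:ℝ) ≤ t - s := by linarith
  have hrβ : (0:ℝ) ≤ (t - s) ^ β := Real.rpow_nonneg hr β
  rcases le_or_gt t 1 with ht1 | ht1
  · -- s ≤ t ≤ 1
    have hs1 : s ≤ 1 := hst.trans ht1
    rw [gHat, gHat, if_pos hs1, if_pos ht1]
    constructor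
    · exact Real.rpow_le_rpow (by linarith) (by linarith) hβ0.le
    · have := rpow_sub_rpow_le hβ0.le hβ1 (b := 1 - t) (a := 1 - s) (by linarith) (by linarith)
      have h2 : (1 - s - (1 - t)) = t - s := by ring
      rw [h2] at this
      linarith
  · rcases le_or_gt s 1 with hs1 | hs1
    · rcases le_or_gt t 2 with ht2 | ht2
      · -- s ≤ 1 < t ≤ 2
        rw [gHat, gHat, if_pos hs1, if_neg (not_le.mpr ht1), if_pos ht2]
        have h1 : (1 - s) ^ β ≤ (t - s) ^ β :=
          Real.rpow_le_rpow (by linarith) (by linarith) hβ0.le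
        have h2 : (t - 1) ^ β ≤ (t - s) ^ β :=
          Real.rpow_le_rpow (by linarith) (by linarith) hβ0.le
        have h3 : 0 ≤ (1 - s) ^ β := Real.rpow_nonneg (by linarith) β
        have h4 : 0 ≤ (t - 1) ^ β := Real.rpow_nonneg (by linarith) β
        constructor <;> linarith
      · -- s ≤ 1, t > 2
        rw [gHat, gHat, if_pos hs1, if_neg (not_le.mpr ht1), if_neg (not_le.mpr ht2)]
        have h1 : (1 - s) ^ β ≤ (t - s) ^ β :=
          Real.rpow_le_rpow (by linarith) (by linarith) hβ0.le
        have h2 : (1:ℝ) ≤ (t - s) ^ β := Real.one_le_rpow (by linarith) hβ0.le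
        have h3 : 0 ≤ (1 - s) ^ β := Real.rpow_nonneg (by linarith) β
        constructor <;> linarith
    · rcases le_or_gt t 2 with ht2 | ht2
      · -- 1 < s ≤ t ≤ 2
        have hs2 : s ≤ 2 := hst.trans ht2
        rw [gHat, gHat, if_neg (not_le.mpr (hs1.trans_le hst)), if_neg (not_le.mpr hs1),
          if_pos ht2, if_pos hs2]
        have h0 : (0:ℝ) ≤ s - 1 := by linarith
        constructor
        · have := Real.rpow_le_rpow h0 (by linarith : s - 1 ≤ t - 1) hβ0.le
          linarith
        · have := rpow_sub_rpow_le hβ0.le hβ1 (b := s - 1) (a := t - 1) h0 (by linarith)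
          have h2 : (t - 1 - (s - 1)) = t - s := by ring
          rw [h2] at this
          linarith
      · rcases le_or_gt s 2 with hs2 | hs2
        · -- 1 < s ≤ 2 < t
          rw [gHat, gHat, if_neg (not_le.mpr ht1), if_neg (not_le.mpr ht2),
            if_neg (not_le.mpr hs1), if_pos hs2]
          have h0 : (0:ℝ) ≤ s - 1 := by linarith
          have hle : (s - 1) ^ β ≤ 1 := by
            calc (s - 1) ^ β ≤ 1 ^ β := Real.rpow_le_rpow h0 (by linarith) hβ0.le
            _ = 1 := Real.one_rpow β
          constructor
          · linarith
          · have h1 : (1:ℝ) ^ β - (s - 1) ^ β ≤ (1 - (s - 1)) ^ β :=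
              rpow_sub_rpow_le hβ0.le hβ1 h0 (by linarith)
            have h2 : (1 - (s - 1) : ℝ) = 2 - s := by ring
            rw [h2, Real.one_rpow] at h1
            have h3 : (2 - s) ^ β ≤ (t - s) ^ β :=
              Real.rpow_le_rpow (by linarith) (by linarith) hβ0.le
            linarith
        · -- both > 2
          rw [gHat, gHat, if_neg (not_le.mpr ht1), if_neg (not_le.mpr ht2),
            if_neg (not_le.mpr hs1), if_neg (not_le.mpr hs2)]
          constructor <;> linarith

lemma gHat_abs {β : ℝ} (hβ0 : 0 < β) (hβ1 : β ≤ 1) {s t : ℝ} (hs : 0 ≤ s) (ht : 0 ≤ t) :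
    |gHat β s - gHat β t| ≤ 2 * |s - t| ^ β := by
  rcases le_total s t with h | h
  · have := gHat_aux hβ0 hβ1 hs h
    rw [abs_of_nonneg (by linarith : (0:ℝ) ≤ gHat β s - gHat β t),
      abs_of_nonpos (by linarith : s - t ≤ 0)]
    have h2 : -(s - t) = t - s := by ring
    rw [h2]
    linarith
  · have := gHat_aux hβ0 hβ1 ht h
    rw [abs_of_nonpos (by linarith : gHat β s - gHat β t ≤ 0),
      abs_of_nonneg (by linarith : (0:ℝ) ≤ s - t)]
    linarith

/-- Scalar profile of `psiTilde`. -/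
noncomputable def gTil (γ t : ℝ) : ℝ := if t ≤ 1 then (1 - t) ^ γ else 0

lemma gTil_aux {γ : ℝ} (hγ0 : 0 < γ) (hγ1 : γ ≤ 1) {s t : ℝ} (hs : 0 ≤ s) (hst : s ≤ t) :
    gTil γ t ≤ gTil γ s ∧ gTil γ s - gTil γ t ≤ (t - s) ^ γ := by
  have hrγ : (0:ℝ) ≤ (t - s) ^ γ := Real.rpow_nonneg (by linarith) γ
  rcases le_or_gt t 1 with ht1 | ht1
  · have hs1 : s ≤ 1 := hst.trans ht1
    rw [gTil, gTil, if_pos hs1, if_pos ht1]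
    constructor
    · exact Real.rpow_le_rpow (by linarith) (by linarith) hγ0.le
    · have := rpow_sub_rpow_le hγ0.le hγ1 (b := 1 - t) (a := 1 - s) (by linarith) (by linarith)
      have h2 : (1 - s - (1 - t)) = t - s := by ring
      rw [h2] at this
      linarith
  · rcases le_or_gt s 1 with hs1 | hs1
    · rw [gTil, gTil, if_pos hs1, if_neg (not_le.mpr ht1)]
      have h1 : (1 - s) ^ γ ≤ (t - s) ^ γ :=
        Real.rpow_le_rpow (by linarith) (by linarith) hγ0.le
      have h3 : 0 ≤ (1 - s) ^ γ := Real.rpow_nonneg (by linarith) γ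
      constructor <;> linarith
    · rw [gTil, gTil, if_neg (not_le.mpr ht1), if_neg (not_le.mpr hs1)]
      constructor <;> linarith

lemma gTil_abs {γ : ℝ} (hγ0 : 0 < γ) (hγ1 : γ ≤ 1) {s t : ℝ} (hs : 0 ≤ s) (ht : 0 ≤ t) :
    |gTil γ s - gTil γ t| ≤ |s - t| ^ γ := by
  rcases le_total s t with h | h
  · have := gTil_aux hγ0 hγ1 hs h
    rw [abs_of_nonneg (by linarith : (0:ℝ) ≤ gTil γ s - gTil γ t),
      abs_of_nonpos (by linarith : s - t ≤ 0)]
    have h2 : -(s - t) = t - s := by ring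
    rw [h2]
    linarith
  · have := gTil_aux hγ0 hγ1 ht h
    rw [abs_of_nonpos (by linarith : gTil γ s - gTil γ t ≤ 0),
      abs_of_nonneg (by linarith : (0:ℝ) ≤ s - t)]
    linarith

lemma psiHat_eq (d : ℕ) (β : ℝ) (u : Fin d → ℝ) : psiHat d β u = gHat β ‖u‖ := rfl

lemma psiTilde_eq (d : ℕ) (γ : ℝ) (u : Fin d → ℝ) : psiTilde d γ u = gTil γ ‖u‖ := rfl

lemma psiHat_holder {d : ℕ} {β : ℝ} (hβ0 : 0 < β) (hβ1 : β ≤ 1) (u v : Fin d → ℝ) :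
    |psiHat d β u - psiHat d β v| ≤ 2 * ‖u - v‖ ^ β := by
  rw [psiHat_eq, psiHat_eq]
  calc |gHat β ‖u‖ - gHat β ‖v‖| ≤ 2 * |‖u‖ - ‖v‖| ^ β :=
        gHat_abs hβ0 hβ1 (norm_nonneg u) (norm_nonneg v)
    _ ≤ 2 * ‖u - v‖ ^ β := by
        have := Real.rpow_le_rpow (abs_nonneg _) (abs_norm_sub_norm_le u v) hβ0.le
        linarith

lemma psiTilde_holder {d : ℕ} {γ : ℝ} (hγ0 : 0 < γ) (hγ1 : γ ≤ 1) (u v : Fin d → ℝ) :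
    |psiTilde d γ u - psiTilde d γ v| ≤ ‖u - v‖ ^ γ := by
  rw [psiTilde_eq, psiTilde_eq]
  calc |gTil γ ‖u‖ - gTil γ ‖v‖| ≤ |‖u‖ - ‖v‖| ^ γ :=
        gTil_abs hγ0 hγ1 (norm_nonneg u) (norm_nonneg v)
    _ ≤ ‖u - v‖ ^ γ :=
        Real.rpow_le_rpow (abs_nonneg _) (abs_norm_sub_norm_le u v) hγ0.le

lemma psiTilde_nonneg (d : ℕ) {γ : ℝ} (u : Fin d → ℝ) : 0 ≤ psiTilde d γ u := by
  unfold psiTilde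
  split_ifs with h
  · exact Real.rpow_nonneg (by linarith) γ
  · exact le_refl 0

/-- The alternative payoff function `φ_m` of the worst-case construction is
`(β, L)`-Hölder on `ℝ^d` (sup norm) when `0 < β ≤ γ ≤ 1`, `C = L / 2^{2+2β}` and
`0 < Δ ≤ min {1, 2^{β+1} ℓ^β}`. -/
theorem phiM_holder (d : ℕ) (hd : 1 ≤ d) (β γ L α ℓ Δ : ℝ) (a : Fin d → ℝ)
    (hβ0 : 0 < β) (hβγ : β ≤ γ) (hγ1 : γ ≤ 1) (hL : 0 < L) (hα : 0 < α) (hℓ : 0 < ℓ)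
    (hΔ0 : 0 < Δ) (hΔ : Δ ≤ min 1 ((2 : ℝ) ^ (β + 1) * ℓ ^ β)) :
    ∀ x y : Fin d → ℝ,
      |phiM d γ β α Δ (L / (2 : ℝ) ^ (2 + 2 * β)) ℓ a x -
        phiM d γ β α Δ (L / (2 : ℝ) ^ (2 + 2 * β)) ℓ a y| ≤ L * ‖x - y‖ ^ β := by
  intro x y
  by_cases hxy : x = y
  · subst hxy
    simp [Real.zero_rpow hβ0.ne']
  have hn0 : 0 < ‖x - y‖ := by
    rw [norm_pos_iff]
    intro h
    exact hxy (sub_eq_zero.mp h)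
  set C : ℝ := L / (2 : ℝ) ^ (2 + 2 * β) with hCdef
  have hβ1 : β ≤ 1 := hβγ.trans hγ1
  have hγ0 : 0 < γ := lt_of_lt_of_le hβ0 hβγ
  have hΔ1 : Δ ≤ 1 := hΔ.trans (min_le_left _ _)
  have hΔℓ : Δ ≤ (2 : ℝ) ^ (β + 1) * ℓ ^ β := hΔ.trans (min_le_right _ _)
  have h2pow_pos : (0:ℝ) < (2 : ℝ) ^ (2 + 2 * β) := Real.rpow_pos_of_pos two_pos _
  have hC : 0 < C := div_pos hL h2pow_pos
  have h2pow_ge1 : (1:ℝ) ≤ (2 : ℝ) ^ (2 + 2 * β) := Real.one_le_rpow one_le_two (by linarith)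
  have hCL : C ≤ L := by
    rw [hCdef, div_le_iff₀ h2pow_pos]
    nlinarith
  have hnβ : 0 < ‖x - y‖ ^ β := Real.rpow_pos_of_pos hn0 β
  -- the two branch bounds
  have habs := abs_max_sub_max_le_max
    (phi0 d γ α Δ C x) (1 / 2 + C * Δ * psiHat d β ((2 * ℓ⁻¹) • (x - a)))
    (phi0 d γ α Δ C y) (1 / 2 + C * Δ * psiHat d β ((2 * ℓ⁻¹) • (y - a)))
  rw [phiM, phiM]
  refine habs.trans (max_le ?_ ?_)
  · -- the φ₀ branch
    set e : ℝ := α * γ / (d : ℝ) with he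
    set c : ℝ := Δ ^ (-(α / (d : ℝ))) with hc
    set a0 : Fin d → ℝ := fun _ => Δ ^ (α / (d : ℝ)) with ha0
    have hc_pos : 0 < c := Real.rpow_pos_of_pos hΔ0 _
    set Bx : ℝ := Δ ^ e * psiTilde d γ (c • (x - a0)) with hBx
    set By : ℝ := Δ ^ e * psiTilde d γ (c • (y - a0)) with hBy
    have hBx0 : 0 ≤ Bx := mul_nonneg (Real.rpow_nonneg hΔ0.le e) (psiTilde_nonneg d _)
    have hBy0 : 0 ≤ By := mul_nonneg (Real.rpow_nonneg hΔ0.le e) (psiTilde_nonneg d _)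
    have hphi : phi0 d γ α Δ C x - phi0 d γ α Δ C y = C * (min Δ By - min Δ Bx) := by
      rw [phi0, phi0]; ring
    rw [hphi, abs_mul, abs_of_nonneg hC.le]
    -- the scaling identity Δ^e * c^γ = 1
    have hscale : Δ ^ e * c ^ γ = 1 := by
      rw [hc, ← Real.rpow_mul hΔ0.le, he, ← Real.rpow_add hΔ0,
        show α * γ / (d : ℝ) + -(α / (d : ℝ)) * γ = 0 by ring, Real.rpow_zero]
    -- bound |By - Bx| ≤ ‖x - y‖ ^ γ
    have hBdiff : |By - Bx| ≤ ‖x - y‖ ^ γ := by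
      have hdiff : By - Bx =
          Δ ^ e * (psiTilde d γ (c • (y - a0)) - psiTilde d γ (c • (x - a0))) := by
        rw [hBx, hBy]; ring
      rw [hdiff, abs_mul, abs_of_nonneg (Real.rpow_nonneg hΔ0.le e)]
      have hψ : |psiTilde d γ (c • (y - a0)) - psiTilde d γ (c • (x - a0))| ≤
          ‖c • (y - a0) - c • (x - a0)‖ ^ γ := psiTilde_holder hγ0 hγ1 _ _
      have hsub : c • (y - a0) - c • (x - a0) = c • (y - x) := by
        rw [← smul_sub]
        congr 1
        abel
      rw [hsub, norm_smul, Real.norm_eq_abs, abs_of_pos hc_pos, norm_sub_rev y x,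
        Real.mul_rpow hc_pos.le (norm_nonneg _)] at hψ
      calc Δ ^ e * |psiTilde d γ (c • (y - a0)) - psiTilde d γ (c • (x - a0))|
          ≤ Δ ^ e * (c ^ γ * ‖x - y‖ ^ γ) := by
            exact mul_le_mul_of_nonneg_left hψ (Real.rpow_nonneg hΔ0.le e)
        _ = (Δ ^ e * c ^ γ) * ‖x - y‖ ^ γ := by ring
        _ = ‖x - y‖ ^ γ := by rw [hscale, one_mul]
    -- bound |min Δ By - min Δ Bx|
    have hmin_abs : |min Δ By - min Δ Bx| ≤ min Δ (‖x - y‖ ^ γ) := by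
      refine le_min ?_ ?_
      · have h1 : 0 ≤ min Δ By := le_min hΔ0.le hBy0
        have h2 : 0 ≤ min Δ Bx := le_min hΔ0.le hBx0
        have h3 : min Δ By ≤ Δ := min_le_left _ _
        have h4 : min Δ Bx ≤ Δ := min_le_left _ _
        rw [abs_le]
        constructor <;> linarith
      · refine (abs_min_sub_min_le_max Δ By Δ Bx).trans ?_
        rw [sub_self, abs_zero]
        exact max_le (Real.rpow_nonneg (norm_nonneg _) γ) hBdiff
    -- conclude
    rcases le_or_gt ‖x - y‖ 1 with hle | hgt
    · have h1 : min Δ (‖x - y‖ ^ γ) ≤ ‖x - y‖ ^ γ := min_le_right _ _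
      have h2 : ‖x - y‖ ^ γ ≤ ‖x - y‖ ^ β :=
        Real.rpow_le_rpow_of_exponent_ge hn0 hle hβγ
      calc C * |min Δ By - min Δ Bx| ≤ C * (‖x - y‖ ^ β) := by
            apply mul_le_mul_of_nonneg_left _ hC.le
            linarith
        _ ≤ L * ‖x - y‖ ^ β := mul_le_mul_of_nonneg_right hCL hnβ.le
    · have h1 : min Δ (‖x - y‖ ^ γ) ≤ Δ := min_le_left _ _
      have h2 : (1:ℝ) ≤ ‖x - y‖ ^ β := Real.one_le_rpow hgt.le hβ0.le
      calc C * |min Δ By - min Δ Bx| ≤ C * 1 := by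
            apply mul_le_mul_of_nonneg_left _ hC.le
            linarith
        _ = C := mul_one C
        _ ≤ L := hCL
        _ = L * 1 := (mul_one L).symm
        _ ≤ L * ‖x - y‖ ^ β := by nlinarith
  · -- the ψ̂ branch
    have hdiff : (1 / 2 + C * Δ * psiHat d β ((2 * ℓ⁻¹) • (x - a))) -
        (1 / 2 + C * Δ * psiHat d β ((2 * ℓ⁻¹) • (y - a))) =
        C * Δ * (psiHat d β ((2 * ℓ⁻¹) • (x - a)) - psiHat d β ((2 * ℓ⁻¹) • (y - a))) := by
      ring
    rw [hdiff, abs_mul, abs_of_nonneg (mul_nonneg hC.le hΔ0.le)]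
    have hψ : |psiHat d β ((2 * ℓ⁻¹) • (x - a)) - psiHat d β ((2 * ℓ⁻¹) • (y - a))| ≤
        2 * ‖(2 * ℓ⁻¹) • (x - a) - (2 * ℓ⁻¹) • (y - a)‖ ^ β := psiHat_holder hβ0 hβ1 _ _
    have hsub : (2 * ℓ⁻¹) • (x - a) - (2 * ℓ⁻¹) • (y - a) = (2 * ℓ⁻¹) • (x - y) := by
      rw [← smul_sub]
      congr 1
      abel
    have hpos : (0:ℝ) < 2 * ℓ⁻¹ := by positivity
    rw [hsub, norm_smul, Real.norm_eq_abs, abs_of_pos hpos,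
      Real.mul_rpow hpos.le (norm_nonneg _)] at hψ
    have hℓβ : (0:ℝ) < ℓ ^ β := Real.rpow_pos_of_pos hℓ β
    have hfactor : (2 * ℓ⁻¹) ^ β = 2 ^ β * (ℓ ^ β)⁻¹ := by
      rw [Real.mul_rpow (by norm_num) (by positivity), Real.inv_rpow hℓ.le]
    -- the key numeric inequality: C * Δ * (2 * (2*ℓ⁻¹)^β) ≤ L
    have hkey : C * Δ * (2 * (2 * ℓ⁻¹) ^ β) ≤ L := by
      have h2β : (0:ℝ) < (2:ℝ) ^ β := Real.rpow_pos_of_pos two_pos β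
      have h2β1 : (0:ℝ) < (2:ℝ) ^ (β + 1) := Real.rpow_pos_of_pos two_pos _
      have hΔ' : Δ * (ℓ ^ β)⁻¹ ≤ 2 ^ (β + 1) := by
        rw [← div_eq_mul_inv, div_le_iff₀ hℓβ]
        exact hΔℓ
      have hC2 : C * (2:ℝ) ^ (2 + 2 * β) = L := by
        rw [hCdef]
        field_simp
      have hexp : (2:ℝ) * ((2:ℝ) ^ (β + 1) * (2:ℝ) ^ β) = (2:ℝ) ^ (2 + 2 * β) := by
        have e1 : (2:ℝ) ^ (β + 1) = 2 ^ β * 2 := by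
          rw [Real.rpow_add two_pos, Real.rpow_one]
        have e2 : (2:ℝ) ^ (2 + 2 * β) = 2 ^ (2:ℝ) * ((2:ℝ) ^ β * 2 ^ β) := by
          rw [show (2:ℝ) + 2 * β = 2 + (β + β) by ring, Real.rpow_add two_pos,
            Real.rpow_add two_pos]
        have e3 : (2:ℝ) ^ (2:ℝ) = 4 := by
          rw [show (2:ℝ) = ((2:ℕ):ℝ) by norm_num, Real.rpow_natCast]
          norm_num
        rw [e1, e2, e3]
        ring
      calc C * Δ * (2 * (2 * ℓ⁻¹) ^ β)
          = C * (2 * (Δ * (ℓ ^ β)⁻¹) * 2 ^ β) := by rw [hfactor]; ring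
        _ ≤ C * (2 * (2 ^ (β + 1)) * 2 ^ β) := by
            apply mul_le_mul_of_nonneg_left _ hC.le
            have := mul_le_mul_of_nonneg_right hΔ' h2β.le
            nlinarith
        _ = C * (2 * ((2:ℝ) ^ (β + 1) * (2:ℝ) ^ β)) := by ring
        _ = C * (2:ℝ) ^ (2 + 2 * β) := by rw [hexp]
        _ = L := hC2
    calc C * Δ * |psiHat d β ((2 * ℓ⁻¹) • (x - a)) - psiHat d β ((2 * ℓ⁻¹) • (y - a))|
        ≤ C * Δ * (2 * ((2 * ℓ⁻¹) ^ β * ‖x - y‖ ^ β)) :=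
          mul_le_mul_of_nonneg_left hψ (mul_nonneg hC.le hΔ0.le)
      _ = (C * Δ * (2 * (2 * ℓ⁻¹) ^ β)) * ‖x - y‖ ^ β := by ring
      _ ≤ L * ‖x - y‖ ^ β := mul_le_mul_of_nonneg_right hkey hnβ.le
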